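/- For weights u, v on ℝ and intervals, define the joint constant [u,v]_{A_2} = sup_J ⟨u⟩_J⟨v^{-1}⟩_J. If w ∈ A_2, k ∈ ℤ, and u = Σ_{I∈𝒫_k}⟨w^{-1}⟩_I χ_I (averaging of w^{-1}) and v = (Σ_{I∈𝒫′_k}⟨w⟩_I χ_I)^{-1} for two (possibly different) translated dyadic partitions 𝒫_k, 𝒫′_k of scale 2^{-k}, then [u, v]_{A_2}^{1/2}([u]_{A_2}^{1/2} + [v]_{A_2}^{1/2}) ≤ c[w]_{A_2} for an absolute constant c. -/

import Mathlib

open MeasureTheory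

/-- The interval of the translated dyadic grid with offset `α`, scale `2^{-k}`, index `j`. -/
def gridInterval (α : ℝ) (k : ℤ) (j : ℤ) : Set ℝ :=
  Set.Ico (α + (j : ℝ) * (2 : ℝ) ^ (-k)) (α + ((j : ℝ) + 1) * (2 : ℝ) ^ (-k))

/-- The averaging of `w` over the translated dyadic grid with offset `α` at scale `2^{-k}`. -/
noncomputable def gridAvg (w : ℝ → ℝ) (α : ℝ) (k : ℤ) (x : ℝ) : ℝ :=
  ((2 : ℝ) ^ (-k))⁻¹ *
    ∫ t in gridInterval α k ⌊(x - α) / (2 : ℝ) ^ (-k)⌋, w t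

/-- The average of `f` over the bounded interval `(a, b]`. -/
noncomputable def intervalAvg (f : ℝ → ℝ) (a b : ℝ) : ℝ :=
  (b - a)⁻¹ * ∫ x in Set.Ioc a b, f x

/-- The `A₂` constant `[x]_{A₂} = sup_J ⟨x⟩_J ⟨x⁻¹⟩_J` over bounded intervals `J`. -/
noncomputable def A2const (x : ℝ → ℝ) : ℝ :=
  sSup {c : ℝ | ∃ a b : ℝ, a < b ∧
    c = intervalAvg x a b * intervalAvg (fun y => (x y)⁻¹) a b}

/-- The joint two-weight constant `[u,v]_{A₂} = sup_J ⟨u⟩_J ⟨v⁻¹⟩_J`. -/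
noncomputable def jointA2const (u v : ℝ → ℝ) : ℝ :=
  sSup {c : ℝ | ∃ a b : ℝ, a < b ∧
    c = intervalAvg u a b * intervalAvg (fun y => (v y)⁻¹) a b}

open Set

/-!
Averaging over a grid of mesh `h = 2^{-k}` is dominated by averaging over the interval enlarged
by `h` on both sides: `⟨gridAvg f⟩_J ≤ 3 ⟨f⟩_{J*}` with `J* = (a - h, b + h]`. For `|J| ≤ h` the
averaged function is bounded on `J` by `h⁻¹ ∫_{J*} f`; for `|J| > h` the grid cells meeting `J`
lie in `J*`, and averaging does not change integrals over unions of cells. On each cell,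
`⟨w⁻¹⟩_I⁻¹ ≤ ⟨w⟩_I` (Cauchy–Schwarz), so the reciprocal of an averaged weight is dominated by
the average of the reciprocal weight. Hence each of `⟨u⟩_J⟨v⁻¹⟩_J`, `⟨u⟩_J⟨u⁻¹⟩_J`,
`⟨v⟩_J⟨v⁻¹⟩_J` is at most `9 ⟨w⟩_{J*}⟨w⁻¹⟩_{J*} ≤ 9 [w]_{A₂}`, which gives `c = 18`.
-/

lemma two_le_mul_inv_add_inv_mul {a b : ℝ} (ha : 0 < a) (hb : 0 < b) :
    2 ≤ a * b⁻¹ + a⁻¹ * b := by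
  have key : a * b⁻¹ + a⁻¹ * b - 2 = (a - b) ^ 2 / (a * b) := by field_simp; ring
  linarith [div_nonneg (sq_nonneg (a - b)) (mul_pos ha hb).le]

theorem measureReal_univ_sq_le_integral_mul_integral_inv {Ω : Type*} [MeasurableSpace Ω]
    {μ : Measure Ω} [IsFiniteMeasure μ] {f : Ω → ℝ} (hf : ∀ x, 0 < f x)
    (hfi : Integrable f μ) (hfi' : Integrable (fun x => (f x)⁻¹) μ) :
    μ.real univ ^ 2 ≤ (∫ x, f x ∂μ) * ∫ x, (f x)⁻¹ ∂μ := by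
  have hprod : ∫ z : Ω × Ω, (2 : ℝ) ∂μ.prod μ
      ≤ ∫ z : Ω × Ω, (f z.1 * (f z.2)⁻¹ + (f z.1)⁻¹ * f z.2) ∂μ.prod μ :=
    integral_mono (integrable_const 2) ((hfi.mul_prod hfi').add (hfi'.mul_prod hfi))
      fun z => two_le_mul_inv_add_inv_mul (hf z.1) (hf z.2)
  rw [integral_add (hfi.mul_prod hfi') (hfi'.mul_prod hfi), integral_prod_mul f (fun x => (f x)⁻¹),
    integral_prod_mul (fun x => (f x)⁻¹) f, integral_const, smul_eq_mul, measureReal_def,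
    ← univ_prod_univ, Measure.prod_prod, ENNReal.toReal_mul, ← measureReal_def] at hprod
  linarith

lemma intervalAvg_nonneg {f : ℝ → ℝ} (hf : ∀ x, 0 ≤ f x) {a b : ℝ} (hab : a ≤ b) :
    0 ≤ intervalAvg f a b :=
  mul_nonneg (inv_nonneg.2 (sub_nonneg.2 hab))
    (setIntegral_nonneg measurableSet_Ioc fun x _ => hf x)

lemma intervalAvg_mono {f g : ℝ → ℝ} {a b : ℝ} (hab : a ≤ b) (hf : ∀ x, 0 ≤ f x)
    (hfg : ∀ x, f x ≤ g x) (hg : IntegrableOn g (Ioc a b)) :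
    intervalAvg f a b ≤ intervalAvg g a b :=
  mul_le_mul_of_nonneg_left
    (integral_mono_of_nonneg (ae_of_all _ fun x => hf x) hg (ae_of_all _ hfg))
    (inv_nonneg.2 (sub_nonneg.2 hab))

lemma jointA2const_le_sq_mul {u v w : ℝ → ℝ} {C W h : ℝ} (hu0 : ∀ x, 0 ≤ u x)
    (hv0 : ∀ x, 0 ≤ v x) (hW : 0 ≤ W) (hh : 0 ≤ h)
    (hw : ∀ a b, a < b → intervalAvg w a b * intervalAvg (fun x => (w x)⁻¹) a b ≤ W)
    (hu : ∀ a b, a < b →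
      intervalAvg u a b ≤ C * intervalAvg (fun x => (w x)⁻¹) (a - h) (b + h))
    (hv : ∀ a b, a < b →
      intervalAvg (fun x => (v x)⁻¹) a b ≤ C * intervalAvg w (a - h) (b + h)) :
    jointA2const u v ≤ C ^ 2 * W := by
  refine Real.sSup_le ?_ (by positivity)
  rintro _ ⟨a, b, hab, rfl⟩
  calc intervalAvg u a b * intervalAvg (fun x => (v x)⁻¹) a b
      ≤ C * intervalAvg (fun x => (w x)⁻¹) (a - h) (b + h) *
          (C * intervalAvg w (a - h) (b + h)) :=
        mul_le_mul (hu a b hab) (hv a b hab)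
          (intervalAvg_nonneg (fun x => inv_nonneg.2 (hv0 x)) hab.le)
          ((intervalAvg_nonneg hu0 hab.le).trans (hu a b hab))
    _ = C ^ 2 * (intervalAvg w (a - h) (b + h) *
          intervalAvg (fun x => (w x)⁻¹) (a - h) (b + h)) := by ring
    _ ≤ C ^ 2 * W := mul_le_mul_of_nonneg_left (hw _ _ (by linarith)) (sq_nonneg C)

lemma sqrt_mul_sqrt_add_sqrt_le {x y z M : ℝ} (hx : x ≤ M) (hy : y ≤ M) (hz : z ≤ M)
    (hM : 0 ≤ M) : √x * (√y + √z) ≤ 2 * M := by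
  calc √x * (√y + √z) ≤ √M * (√M + √M) := by gcongr
    _ = 2 * M := by rw [← two_mul, mul_left_comm, Real.mul_self_sqrt hM]

section GridAvg

variable {α : ℝ} {k : ℤ}

lemma mem_gridInterval_floor (x : ℝ) : x ∈ gridInterval α k ⌊(x - α) / (2 : ℝ) ^ (-k)⌋ := by
  have h : (0 : ℝ) < 2 ^ (-k) := by positivity
  have h1 := Int.floor_le ((x - α) / (2 : ℝ) ^ (-k))
  have h2 := Int.lt_floor_add_one ((x - α) / (2 : ℝ) ^ (-k))
  rw [le_div_iff₀ h] at h1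
  rw [div_lt_iff₀ h] at h2
  exact ⟨by linarith, by linarith⟩

lemma floor_eq_of_mem_gridInterval {j : ℤ} {x : ℝ} (hx : x ∈ gridInterval α k j) :
    ⌊(x - α) / (2 : ℝ) ^ (-k)⌋ = j := by
  have h : (0 : ℝ) < 2 ^ (-k) := by positivity
  rw [Int.floor_eq_iff, le_div_iff₀ h, div_lt_iff₀ h]
  exact ⟨by linarith [hx.1], by linarith [hx.2]⟩

lemma gridAvg_eq_of_mem_gridInterval (f : ℝ → ℝ) {j : ℤ} {x : ℝ}
    (hx : x ∈ gridInterval α k j) :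
    gridAvg f α k x = ((2 : ℝ) ^ (-k))⁻¹ * ∫ t in gridInterval α k j, f t := by
  rw [gridAvg, floor_eq_of_mem_gridInterval hx]

lemma gridInterval_subset_Ioc {j : ℤ} {x p q : ℝ} (hx : x ∈ gridInterval α k j)
    (hpx : p ≤ x) (hxq : x ≤ q) :
    gridInterval α k j ⊆ Ioc (p - (2 : ℝ) ^ (-k)) (q + (2 : ℝ) ^ (-k)) :=
  fun _ hy => ⟨by linarith [hx.2, hy.1], by linarith [hx.1, hy.2]⟩

lemma measurable_gridAvg (f : ℝ → ℝ) (α : ℝ) (k : ℤ) : Measurable (gridAvg f α k) :=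
  show Measurable ((fun j : ℤ => ((2 : ℝ) ^ (-k))⁻¹ * ∫ t in gridInterval α k j, f t) ∘
    fun x => ⌊(x - α) / (2 : ℝ) ^ (-k)⌋) from
  measurable_from_top.comp (Int.measurable_floor.comp ((measurable_id.sub_const α).div_const _))

lemma setIntegral_gridAvg_gridInterval (f : ℝ → ℝ) (j : ℤ) :
    ∫ x in gridInterval α k j, gridAvg f α k x = ∫ x in gridInterval α k j, f x := by
  have h : (0 : ℝ) < 2 ^ (-k) := by positivity
  rw [setIntegral_congr_fun (s := gridInterval α k j) measurableSet_Ico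
      fun x hx => gridAvg_eq_of_mem_gridInterval f hx,
    setIntegral_const, smul_eq_mul, measureReal_def, gridInterval, Real.volume_Ico,
    ENNReal.toReal_ofReal (by linarith), ← mul_assoc]
  field_simp
  ring_nf

variable {f : ℝ → ℝ}

lemma gridAvg_nonneg (hf : ∀ x, 0 ≤ f x) (x : ℝ) : 0 ≤ gridAvg f α k x :=
  mul_nonneg (inv_nonneg.2 (by positivity))
    (setIntegral_nonneg measurableSet_Ico fun y _ => hf y)

lemma gridAvg_le_integral_Ioc (hf : ∀ x, 0 ≤ f x) (hloc : LocallyIntegrable f) {p q x : ℝ}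
    (hpx : p ≤ x) (hxq : x ≤ q) :
    gridAvg f α k x
      ≤ ((2 : ℝ) ^ (-k))⁻¹ * ∫ t in Ioc (p - (2 : ℝ) ^ (-k)) (q + (2 : ℝ) ^ (-k)), f t :=
  mul_le_mul_of_nonneg_left
    (setIntegral_mono_set
      ((hloc.integrableOn_isCompact isCompact_Icc).mono_set Ioc_subset_Icc_self)
      (ae_of_all _ hf) (gridInterval_subset_Ioc (mem_gridInterval_floor x) hpx hxq).eventuallyLE)
    (inv_nonneg.2 (by positivity))

lemma gridAvg_integrableOn_Icc (hf : ∀ x, 0 ≤ f x) (hloc : LocallyIntegrable f) (p q : ℝ) :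
    IntegrableOn (gridAvg f α k) (Icc p q) := by
  refine Integrable.mono' (g := fun _ => ((2 : ℝ) ^ (-k))⁻¹ *
      ∫ t in Ioc (p - (2 : ℝ) ^ (-k)) (q + (2 : ℝ) ^ (-k)), f t)
    (integrableOn_const measure_Icc_lt_top.ne)
    (measurable_gridAvg f α k).aestronglyMeasurable.restrict ?_
  filter_upwards [ae_restrict_mem measurableSet_Icc] with x hx
  rw [Real.norm_of_nonneg (gridAvg_nonneg hf x)]
  exact gridAvg_le_integral_Ioc hf hloc hx.1 hx.2

lemma setIntegral_gridAvg_Ico (hf : ∀ x, 0 ≤ f x) (hloc : LocallyIntegrable f) {j m : ℤ}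
    (hjm : j ≤ m) :
    ∫ x in Ico (α + j * (2 : ℝ) ^ (-k)) (α + m * (2 : ℝ) ^ (-k)), gridAvg f α k x
      = ∫ x in Ico (α + j * (2 : ℝ) ^ (-k)) (α + m * (2 : ℝ) ^ (-k)), f x := by
  induction m, hjm using Int.leInduction with
  | base => simp
  | succ m hjm ih =>
    have h : (0 : ℝ) < 2 ^ (-k) := by positivity
    have hjm' : (j : ℝ) ≤ m := by exact_mod_cast hjm
    have hsplit : Ico (α + j * (2 : ℝ) ^ (-k)) (α + ((m + 1 : ℤ) : ℝ) * (2 : ℝ) ^ (-k))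
        = Ico (α + j * (2 : ℝ) ^ (-k)) (α + m * (2 : ℝ) ^ (-k)) ∪ gridInterval α k m := by
      rw [gridInterval, Ico_union_Ico_eq_Ico (by nlinarith) (by nlinarith)]
      push_cast
      rfl
    have hdisj : Disjoint (Ico (α + j * (2 : ℝ) ^ (-k)) (α + m * (2 : ℝ) ^ (-k)))
        (gridInterval α k m) := Ico_disjoint_Ico_same
    rw [hsplit, setIntegral_union hdisj measurableSet_Ico
        ((gridAvg_integrableOn_Icc hf hloc _ _).mono_set Ico_subset_Icc_self)
        ((gridAvg_integrableOn_Icc hf hloc _ _).mono_set Ico_subset_Icc_self),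
      setIntegral_union hdisj measurableSet_Ico
        ((hloc.integrableOn_isCompact isCompact_Icc).mono_set Ico_subset_Icc_self)
        ((hloc.integrableOn_isCompact isCompact_Icc).mono_set Ico_subset_Icc_self),
      ih, setIntegral_gridAvg_gridInterval]

lemma setIntegral_gridAvg_Ioc_le (hf : ∀ x, 0 ≤ f x) (hloc : LocallyIntegrable f) {a b : ℝ}
    (hab : a ≤ b) :
    ∫ x in Ioc a b, gridAvg f α k x
      ≤ ∫ x in Ioc (a - (2 : ℝ) ^ (-k)) (b + (2 : ℝ) ^ (-k)), f x := by
  set j := ⌊(a - α) / (2 : ℝ) ^ (-k)⌋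
  set m := ⌊(b - α) / (2 : ℝ) ^ (-k)⌋ + 1
  have ha := mem_gridInterval_floor (α := α) (k := k) a
  have hb := mem_gridInterval_floor (α := α) (k := k) b
  have hjm : j ≤ m := by
    have : j ≤ ⌊(b - α) / (2 : ℝ) ^ (-k)⌋ := Int.floor_mono (by gcongr)
    omega
  have hm : (m : ℝ) = ⌊(b - α) / (2 : ℝ) ^ (-k)⌋ + 1 := by push_cast [m]; rfl
  have hcover : Ioc a b ⊆ Ico (α + j * (2 : ℝ) ^ (-k)) (α + m * (2 : ℝ) ^ (-k)) := fun x hx => by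
    rw [hm]
    exact ⟨by linarith [ha.1, hx.1], by linarith [hb.2, hx.2]⟩
  have hinside : Ico (α + j * (2 : ℝ) ^ (-k)) (α + m * (2 : ℝ) ^ (-k))
      ⊆ Ioc (a - (2 : ℝ) ^ (-k)) (b + (2 : ℝ) ^ (-k)) := fun x hx => by
    rw [hm] at hx
    exact ⟨by linarith [ha.2, hx.1], by linarith [hb.1, hx.2]⟩
  calc ∫ x in Ioc a b, gridAvg f α k x
      ≤ ∫ x in Ico (α + j * (2 : ℝ) ^ (-k)) (α + m * (2 : ℝ) ^ (-k)), gridAvg f α k x :=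
        setIntegral_mono_set ((gridAvg_integrableOn_Icc hf hloc _ _).mono_set Ico_subset_Icc_self)
          (ae_of_all _ (gridAvg_nonneg hf)) hcover.eventuallyLE
    _ = ∫ x in Ico (α + j * (2 : ℝ) ^ (-k)) (α + m * (2 : ℝ) ^ (-k)), f x :=
        setIntegral_gridAvg_Ico hf hloc hjm
    _ ≤ _ := setIntegral_mono_set ((hloc.integrableOn_isCompact isCompact_Icc).mono_set
          Ioc_subset_Icc_self) (ae_of_all _ hf) hinside.eventuallyLE

lemma setIntegral_gridAvg_Ioc_le_sub_mul (hf : ∀ x, 0 ≤ f x) (hloc : LocallyIntegrable f)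
    {a b : ℝ} (hab : a ≤ b) :
    ∫ x in Ioc a b, gridAvg f α k x ≤ (b - a) *
      (((2 : ℝ) ^ (-k))⁻¹ * ∫ x in Ioc (a - (2 : ℝ) ^ (-k)) (b + (2 : ℝ) ^ (-k)), f x) := by
  calc ∫ x in Ioc a b, gridAvg f α k x
      ≤ ∫ _ in Ioc a b, ((2 : ℝ) ^ (-k))⁻¹ *
          ∫ x in Ioc (a - (2 : ℝ) ^ (-k)) (b + (2 : ℝ) ^ (-k)), f x :=
        setIntegral_mono_on ((gridAvg_integrableOn_Icc hf hloc _ _).mono_set Ioc_subset_Icc_self)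
          (integrableOn_const measure_Ioc_lt_top.ne) measurableSet_Ioc
          fun x hx => gridAvg_le_integral_Ioc hf hloc hx.1.le hx.2
    _ = _ := by
        rw [setIntegral_const, smul_eq_mul, measureReal_def, Real.volume_Ioc,
          ENNReal.toReal_ofReal (sub_nonneg.2 hab)]

theorem intervalAvg_gridAvg_le (hf : ∀ x, 0 ≤ f x) (hloc : LocallyIntegrable f) {a b : ℝ}
    (hab : a < b) :
    intervalAvg (gridAvg f α k) a b
      ≤ 3 * intervalAvg f (a - (2 : ℝ) ^ (-k)) (b + (2 : ℝ) ^ (-k)) := by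
  have h : (0 : ℝ) < 2 ^ (-k) := by positivity
  have hba : 0 < b - a := sub_pos.2 hab
  have hS : 0 ≤ ∫ x in Ioc (a - (2 : ℝ) ^ (-k)) (b + (2 : ℝ) ^ (-k)), f x :=
    setIntegral_nonneg measurableSet_Ioc fun x _ => hf x
  unfold intervalAvg
  rw [← mul_assoc]
  rcases le_total (b - a) ((2 : ℝ) ^ (-k)) with hshort | hlong
  · calc (b - a)⁻¹ * ∫ x in Ioc a b, gridAvg f α k x
        ≤ (b - a)⁻¹ * ((b - a) * (((2 : ℝ) ^ (-k))⁻¹ *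
            ∫ x in Ioc (a - (2 : ℝ) ^ (-k)) (b + (2 : ℝ) ^ (-k)), f x)) := by
          gcongr
          exact setIntegral_gridAvg_Ioc_le_sub_mul hf hloc hab.le
      _ = ((2 : ℝ) ^ (-k))⁻¹ * ∫ x in Ioc (a - (2 : ℝ) ^ (-k)) (b + (2 : ℝ) ^ (-k)), f x := by
          field_simp
      _ ≤ _ := by
          gcongr
          rw [← div_eq_mul_inv, le_div_iff₀ (by linarith), inv_mul_eq_div, div_le_iff₀ h]
          linarith
  · calc (b - a)⁻¹ * ∫ x in Ioc a b, gridAvg f α k x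
        ≤ (b - a)⁻¹ * ∫ x in Ioc (a - (2 : ℝ) ^ (-k)) (b + (2 : ℝ) ^ (-k)), f x := by
          gcongr
          exact setIntegral_gridAvg_Ioc_le hf hloc hab.le
      _ ≤ _ := by
          gcongr
          rw [← div_eq_mul_inv, le_div_iff₀ (by linarith), inv_mul_eq_div, div_le_iff₀ hba]
          linarith

lemma inv_gridAvg_inv_le_gridAvg (hf : ∀ x, 0 < f x) (hloc : LocallyIntegrable f)
    (hloc' : LocallyIntegrable fun x => (f x)⁻¹) (x : ℝ) :
    (gridAvg (fun x => (f x)⁻¹) α k x)⁻¹ ≤ gridAvg f α k x := by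
  have h : (0 : ℝ) < 2 ^ (-k) := by positivity
  set I := gridInterval α k ⌊(x - α) / (2 : ℝ) ^ (-k)⌋
  have hIvol : volume I = ENNReal.ofReal ((2 : ℝ) ^ (-k)) := by
    rw [show I = Ico _ _ from rfl, Real.volume_Ico]
    ring_nf
  have : IsFiniteMeasure (volume.restrict I) :=
    isFiniteMeasure_restrict.2 (hIvol ▸ ENNReal.ofReal_ne_top)
  have hcs := measureReal_univ_sq_le_integral_mul_integral_inv (μ := volume.restrict I) hf
    ((hloc.integrableOn_isCompact isCompact_Icc).mono_set Ico_subset_Icc_self)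
    ((hloc'.integrableOn_isCompact isCompact_Icc).mono_set Ico_subset_Icc_self)
  rw [measureReal_def, Measure.restrict_apply_univ, hIvol, ENNReal.toReal_ofReal h.le] at hcs
  have hA : 0 ≤ ∫ t in I, (f t)⁻¹ :=
    setIntegral_nonneg measurableSet_Ico fun t _ => (inv_pos.2 (hf t)).le
  change (((2 : ℝ) ^ (-k))⁻¹ * ∫ t in I, (f t)⁻¹)⁻¹ ≤ ((2 : ℝ) ^ (-k))⁻¹ * ∫ t in I, f t
  rcases hA.eq_or_lt with hA0 | hApos
  · rw [← hA0, mul_zero, inv_zero]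
    exact gridAvg_nonneg (fun t => (hf t).le) x
  · rw [mul_inv, inv_inv, ← div_eq_mul_inv, div_le_iff₀ hApos, inv_mul_eq_div, mul_comm,
      ← mul_div_assoc, le_div_iff₀ h]
    linarith

lemma intervalAvg_inv_gridAvg_inv_le (hf : ∀ x, 0 < f x) (hloc : LocallyIntegrable f)
    (hloc' : LocallyIntegrable fun x => (f x)⁻¹) {a b : ℝ} (hab : a < b) :
    intervalAvg (fun x => (gridAvg (fun x => (f x)⁻¹) α k x)⁻¹) a b
      ≤ 3 * intervalAvg f (a - (2 : ℝ) ^ (-k)) (b + (2 : ℝ) ^ (-k)) :=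
  (intervalAvg_mono hab.le
      (fun x => inv_nonneg.2 (gridAvg_nonneg (fun y => (inv_pos.2 (hf y)).le) x))
      (inv_gridAvg_inv_le_gridAvg hf hloc hloc')
      ((gridAvg_integrableOn_Icc (fun y => (hf y).le) hloc a b).mono_set Ioc_subset_Icc_self)).trans
    (intervalAvg_gridAvg_le (fun y => (hf y).le) hloc hab)

lemma intervalAvg_inv_gridAvg_le (hf : ∀ x, 0 < f x) (hloc : LocallyIntegrable f)
    (hloc' : LocallyIntegrable fun x => (f x)⁻¹) {a b : ℝ} (hab : a < b) :
    intervalAvg (fun x => (gridAvg f α k x)⁻¹) a b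
      ≤ 3 * intervalAvg (fun x => (f x)⁻¹) (a - (2 : ℝ) ^ (-k)) (b + (2 : ℝ) ^ (-k)) := by
  simpa only [inv_inv] using intervalAvg_inv_gridAvg_inv_le (α := α) (fun x => inv_pos.2 (hf x))
    hloc' (by simpa only [inv_inv] using hloc) hab

end GridAvg

/-- there is an absolute constant `c` such that if `w ∈ A₂` with
`[w]_{A₂} ≤ W`, and `u` is the grid averaging of `w⁻¹` (grid offset `α`, scale `2^{-k}`)
and `v = (grid averaging of w, offset β, scale 2^{-k})⁻¹`, then
`[u,v]_{A₂}^{1/2}([u]_{A₂}^{1/2} + [v]_{A₂}^{1/2}) ≤ cW`. -/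
theorem averaged_weights_joint_A2_bound :
    ∃ c : ℝ, 0 < c ∧
      ∀ w : ℝ → ℝ, Measurable w → (∀ x, 0 < w x) →
        LocallyIntegrable w volume →
        LocallyIntegrable (fun x => (w x)⁻¹) volume →
        ∀ W : ℝ, 1 ≤ W →
        (∀ a b : ℝ, a < b →
          intervalAvg w a b * intervalAvg (fun x => (w x)⁻¹) a b ≤ W) →
        ∀ (k : ℤ) (α β : ℝ),
          Real.sqrt
              (jointA2const (gridAvg (fun x => (w x)⁻¹) α k)
                (fun x => (gridAvg w β k x)⁻¹)) *
            (Real.sqrt (A2const (gridAvg (fun x => (w x)⁻¹) α k)) +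
              Real.sqrt (A2const (fun x => (gridAvg w β k x)⁻¹))) ≤ c * W := by
  refine ⟨18, by norm_num, fun w _ hw hwloc hwloc' W hW hA2 k α β => ?_⟩
  have hw' : ∀ x, 0 < (w x)⁻¹ := fun x => inv_pos.2 (hw x)
  have hu0 : ∀ x, 0 ≤ gridAvg (fun x => (w x)⁻¹) α k x := gridAvg_nonneg fun x => (hw' x).le
  have hv0 : ∀ x, 0 ≤ (gridAvg w β k x)⁻¹ :=
    fun x => inv_nonneg.2 (gridAvg_nonneg (fun x => (hw x).le) x)
  have hu := fun a b (hab : a < b) =>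
    intervalAvg_gridAvg_le (α := α) (k := k) (fun x => (hw' x).le) hwloc' hab
  have hu' := fun a b (hab : a < b) =>
    intervalAvg_inv_gridAvg_inv_le (α := α) (k := k) hw hwloc hwloc' hab
  have hv := fun a b (hab : a < b) =>
    intervalAvg_inv_gridAvg_le (α := β) (k := k) hw hwloc hwloc' hab
  have hv' : ∀ a b, a < b → intervalAvg (fun x => ((gridAvg w β k x)⁻¹)⁻¹) a b
      ≤ 3 * intervalAvg w (a - (2 : ℝ) ^ (-k)) (b + (2 : ℝ) ^ (-k)) := by
    simpa only [inv_inv] using fun a b (hab : a < b) =>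
      intervalAvg_gridAvg_le (α := β) (k := k) (fun x => (hw x).le) hwloc hab
  have hW0 : (0 : ℝ) ≤ W := by linarith
  -- `A2const u` unfolds to `jointA2const u u`.
  calc _ ≤ 2 * (3 ^ 2 * W) := sqrt_mul_sqrt_add_sqrt_le
        (jointA2const_le_sq_mul hu0 hv0 hW0 (by positivity) hA2 hu hv')
        (jointA2const_le_sq_mul hu0 hu0 hW0 (by positivity) hA2 hu hu')
        (jointA2const_le_sq_mul hv0 hv0 hW0 (by positivity) hA2 hv hv') (by positivity)
    _ = 18 * W := by ring
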